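/- Let N ≥ 1, 0 < s < 1, and let q satisfy 1 < q < 1*_s = N/(N−s). Then S_{s,q}(ℝ^N) ≥ [ (N/s)(1/q − 1/1*_s) ]^{(N/s)(1/1*_s − 1/q)} · [ (N/s)(1 − 1/q) ]^{(N/s)(1/q − 1)} · 𝒮_{s,1*}^{(N/s)(1 − 1/q)}. -/

import Mathlib

open MeasureTheory Real
open scoped ENNReal

noncomputable section

/-- Euclidean space `ℝ^N`. -/
abbrev Rn (N : ℕ) := EuclideanSpace ℝ (Fin N)

/-- The Gagliardo `W^{s,1}` seminorm `[u]_{s,1}`, as an extended nonnegative real. -/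
def gagE (N : ℕ) (s : ℝ) (u : Rn N → ℝ) : ℝ≥0∞ :=
  ∫⁻ x, ∫⁻ y, ENNReal.ofReal (|u x - u y| / dist x y ^ ((N : ℝ) + s))

/-- Membership in `W^{s,1}(ℝ^N)`: integrable with finite Gagliardo seminorm. -/
def memW (N : ℕ) (s : ℝ) (u : Rn N → ℝ) : Prop :=
  Integrable u volume ∧ gagE N s u < ⊤

/-- Real-valued Gagliardo seminorm. -/
def gag (N : ℕ) (s : ℝ) (u : Rn N → ℝ) : ℝ := (gagE N s u).toReal

/-- The `L^q(ℝ^N)` norm. -/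
def Lq (N : ℕ) (q : ℝ) (u : Rn N → ℝ) : ℝ := (∫ x, |u x| ^ q) ^ (1 / q)

/-- `u` is nonzero as an element of a Lebesgue-type space. -/
def nontriv (N : ℕ) (u : Rn N → ℝ) : Prop := ¬ u =ᵐ[(volume : Measure (Rn N))] 0

/-- The best constant `S_{s,q}(Ω)` of the embedding `W^{s,1}_0(Ω) ↪ L^q(Ω)`. -/
def SDom (N : ℕ) (s q : ℝ) (Ω : Set (Rn N)) : ℝ :=
  sInf { r : ℝ | ∃ u : Rn N → ℝ, memW N s u ∧
      (∀ᵐ x ∂(volume : Measure (Rn N)), x ∉ Ω → u x = 0) ∧ nontriv N u ∧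
      r = gag N s u / Lq N q u }

/-- The critical constant `𝒮_{s,1*}`. -/
def Scrit (N : ℕ) (s : ℝ) : ℝ :=
  sInf { r : ℝ | ∃ u : Rn N → ℝ, memW N s u ∧ nontriv N u ∧
      r = gag N s u / Lq N ((N : ℝ) / ((N : ℝ) - s)) u }

/-- The best constant `S_{s,q}(ℝ^N)` of the embedding `W^{s,1}(ℝ^N) ↪ L^q(ℝ^N)`. -/
def SFull (N : ℕ) (s q : ℝ) : ℝ :=
  sInf { r : ℝ | ∃ u : Rn N → ℝ, memW N s u ∧ nontriv N u ∧
      r = (gag N s u + ∫ x, |u x|) / Lq N q u }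

/-!
Interpolate `L^q` between `L^1` and `L^{1*}`: for `1/q = θ + (1-θ)/1*`, that is
`θ = (N/s)(1/q - 1/1*)`, Hölder's inequality gives `‖u‖_q ≤ ‖u‖_1^θ ‖u‖_{1*}^{1-θ}`, and
`‖u‖_{1*} ≤ [u]_{s,1} / 𝒮_{s,1*}`. The weighted AM-GM inequality
`a^θ b^{1-θ} ≤ θ^θ (1-θ)^{1-θ} (a + b)` with `a = ‖u‖_1`, `b = [u]_{s,1}` then yields
`θ^{-θ} (1-θ)^{-(1-θ)} 𝒮_{s,1*}^{1-θ} ‖u‖_q ≤ [u]_{s,1} + ‖u‖_1`, and `1 - θ = (N/s)(1 - 1/q)`.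
-/

namespace ENNReal

variable {α : Type*} [MeasurableSpace α] {μ : Measure α}

theorem lintegral_rpow_le_interpolation {f : α → ℝ≥0∞} (hf : AEMeasurable f μ)
    {a b t : ℝ} (ha : 0 ≤ a) (hb : 0 ≤ b) (ht0 : 0 < t) (ht1 : t < 1) :
    ∫⁻ x, f x ^ (t * a + (1 - t) * b) ∂μ ≤
      (∫⁻ x, f x ^ a ∂μ) ^ t * (∫⁻ x, f x ^ b ∂μ) ^ (1 - t) := by
  have ht1' : 0 < 1 - t := sub_pos.2 ht1
  have hconj : (1 / t).HolderConjugate (1 / (1 - t)) :=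
    Real.holderConjugate_one_div ht0 ht1' (by ring)
  have hHolder := lintegral_mul_le_Lp_mul_Lq μ hconj (hf.pow_const (t * a))
    (hf.pow_const ((1 - t) * b))
  simp only [Pi.mul_apply, one_div_one_div, ← ENNReal.rpow_mul] at hHolder
  convert hHolder using 3 with x
  · rw [ENNReal.rpow_add_of_nonneg _ _ (by positivity) (by positivity)]
  · field_simp
  · field_simp [ht1'.ne']

end ENNReal

namespace MeasureTheory

variable {α : Type*} [MeasurableSpace α] {μ : Measure α} {f : α → ℝ} {a b c t : ℝ}

theorem lintegral_ofReal_rpow_le_interpolation (hf0 : 0 ≤ f) (hf : AEMeasurable f μ)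
    (ha : 0 ≤ a) (hb : 0 ≤ b) (ht0 : 0 < t) (ht1 : t < 1)
    (hc : c = t * a + (1 - t) * b) (hfa : Integrable (fun x => f x ^ a) μ)
    (hfb : Integrable (fun x => f x ^ b) μ) :
    ∫⁻ x, ENNReal.ofReal (f x ^ c) ∂μ ≤
      ENNReal.ofReal ((∫ x, f x ^ a ∂μ) ^ t * (∫ x, f x ^ b ∂μ) ^ (1 - t)) := by
  subst hc
  have hrpow (e : ℝ) (he : 0 ≤ e) :
      ∫⁻ x, ENNReal.ofReal (f x ^ e) ∂μ = ∫⁻ x, ENNReal.ofReal (f x) ^ e ∂μ :=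
    lintegral_congr fun x => (ENNReal.ofReal_rpow_of_nonneg (hf0 x) he).symm
  have hint (e : ℝ) (he : Integrable (fun x => f x ^ e) μ) :
      ∫⁻ x, ENNReal.ofReal (f x ^ e) ∂μ = ENNReal.ofReal (∫ x, f x ^ e ∂μ) :=
    (ofReal_integral_eq_lintegral_ofReal he (.of_forall fun x => rpow_nonneg (hf0 x) e)).symm
  have hX : 0 ≤ ∫ x, f x ^ a ∂μ := integral_nonneg fun x => rpow_nonneg (hf0 x) a
  have hY : 0 ≤ ∫ x, f x ^ b ∂μ := integral_nonneg fun x => rpow_nonneg (hf0 x) b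
  rw [hrpow _ (by nlinarith), ENNReal.ofReal_mul (rpow_nonneg hX t),
    ← ENNReal.ofReal_rpow_of_nonneg hX ht0.le, ← ENNReal.ofReal_rpow_of_nonneg hY (by linarith),
    ← hint a hfa, ← hint b hfb, hrpow a ha, hrpow b hb]
  exact ENNReal.lintegral_rpow_le_interpolation
    (f := fun x => ENNReal.ofReal (f x)) (ENNReal.measurable_ofReal.comp_aemeasurable hf)
    ha hb ht0 ht1

theorem integrable_rpow_of_interpolation (hf0 : 0 ≤ f) (hf : AEMeasurable f μ)
    (ha : 0 ≤ a) (hb : 0 ≤ b) (ht0 : 0 < t) (ht1 : t < 1)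
    (hc : c = t * a + (1 - t) * b) (hfa : Integrable (fun x => f x ^ a) μ)
    (hfb : Integrable (fun x => f x ^ b) μ) :
    Integrable (fun x => f x ^ c) μ :=
  ⟨(hf.pow_const _).aestronglyMeasurable,
    (hasFiniteIntegral_iff_ofReal (.of_forall fun x => rpow_nonneg (hf0 x) _)).2
      ((lintegral_ofReal_rpow_le_interpolation hf0 hf ha hb ht0 ht1 hc hfa hfb).trans_lt
        ENNReal.ofReal_lt_top)⟩

theorem integral_rpow_le_interpolation (hf0 : 0 ≤ f) (hf : AEMeasurable f μ)
    (ha : 0 ≤ a) (hb : 0 ≤ b) (ht0 : 0 < t) (ht1 : t < 1)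
    (hc : c = t * a + (1 - t) * b) (hfa : Integrable (fun x => f x ^ a) μ)
    (hfb : Integrable (fun x => f x ^ b) μ) :
    ∫ x, f x ^ c ∂μ ≤
      (∫ x, f x ^ a ∂μ) ^ t * (∫ x, f x ^ b ∂μ) ^ (1 - t) := by
  have hX : 0 ≤ ∫ x, f x ^ a ∂μ := integral_nonneg fun x => rpow_nonneg (hf0 x) a
  have hY : 0 ≤ ∫ x, f x ^ b ∂μ := integral_nonneg fun x => rpow_nonneg (hf0 x) b
  rw [← ENNReal.ofReal_le_ofReal_iff (mul_nonneg (rpow_nonneg hX t) (rpow_nonneg hY _)),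
    ofReal_integral_eq_lintegral_ofReal
      (integrable_rpow_of_interpolation hf0 hf ha hb ht0 ht1 hc hfa hfb)
      (.of_forall fun x => rpow_nonneg (hf0 x) _)]
  exact lintegral_ofReal_rpow_le_interpolation hf0 hf ha hb ht0 ht1 hc hfa hfb

end MeasureTheory

theorem pos_and_lt_of_one_lt_div_sub {a b : ℝ} (ha : 0 ≤ a) (h : 1 < a / (a - b)) :
    0 < b ∧ b < a := by
  have hden : 0 < a - b := by
    by_contra! hden
    linarith [div_nonpos_of_nonneg_of_nonpos ha hden]
  have := (one_lt_div hden).1 h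
  constructor <;> linarith

theorem interpolation_weight_of_one_div_eq {p q θ : ℝ} (hp : 0 < p) (hθ0 : 0 < θ)
    (hθ1 : θ < 1) (hq : 1 / q = θ + (1 - θ) / p) :
    0 < q * θ ∧ q * θ < 1 ∧ q = q * θ * 1 + (1 - q * θ) * p := by
  have hq0 : 0 < q := one_div_pos.1 (hq ▸ by positivity)
  have hθq : θ < 1 / q := by rw [hq]; linarith [div_pos (sub_pos.2 hθ1) hp]
  refine ⟨by positivity, by rwa [lt_div_iff₀ hq0, mul_comm] at hθq, ?_⟩
  field_simp at hq
  linear_combination -hq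

theorem rpow_mul_rpow_le_add {θ a b : ℝ} (hθ0 : 0 < θ) (hθ1 : θ < 1) (ha : 0 ≤ a)
    (hb : 0 ≤ b) :
    a ^ θ * b ^ (1 - θ) ≤ θ ^ θ * (1 - θ) ^ (1 - θ) * (a + b) := by
  have h1θ : 0 < 1 - θ := sub_pos.2 hθ1
  have hamgm := geom_mean_le_arith_mean2_weighted hθ0.le h1θ.le (div_nonneg ha hθ0.le)
    (div_nonneg hb h1θ.le) (by ring)
  rw [div_rpow ha hθ0.le, div_rpow hb h1θ.le, mul_div_cancel₀ _ hθ0.ne',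
    mul_div_cancel₀ _ h1θ.ne'] at hamgm
  rw [div_mul_div_comm, div_le_iff₀ (by positivity)] at hamgm
  linarith

section

variable {N : ℕ}

theorem Lq_nonneg (q : ℝ) (u : Rn N → ℝ) : 0 ≤ Lq N q u :=
  rpow_nonneg (integral_nonneg fun _ => rpow_nonneg (abs_nonneg _) q) _

theorem integrable_abs_rpow_of_Lq_ne_zero {p : ℝ} {u : Rn N → ℝ} (hp : p ≠ 0)
    (h : Lq N p u ≠ 0) : Integrable (fun x => |u x| ^ p) := by
  by_contra hu
  exact h (by rw [Lq, integral_undef hu, zero_rpow (one_div_ne_zero hp)])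

theorem Lq_pos {q : ℝ} {u : Rn N → ℝ} (hq : 0 < q) (hu : nontriv N u)
    (huq : Integrable (fun x => |u x| ^ q)) : 0 < Lq N q u := by
  have hnn : 0 ≤ fun x => |u x| ^ q := fun x => rpow_nonneg (abs_nonneg _) q
  refine rpow_pos_of_pos ((integral_nonneg hnn).lt_of_ne' fun h0 => hu ?_) _
  filter_upwards [(integral_eq_zero_iff_of_nonneg hnn huq).1 h0] with x hx
  simpa [rpow_eq_zero (abs_nonneg _) hq.ne'] using hx

theorem integrable_abs_rpow_of_interpolation {p q θ : ℝ} {u : Rn N → ℝ} (hu : Integrable u)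
    (hup : Integrable (fun x => |u x| ^ p)) (hp : 0 < p) (hθ0 : 0 < θ) (hθ1 : θ < 1)
    (hq : 1 / q = θ + (1 - θ) / p) : Integrable (fun x => |u x| ^ q) := by
  obtain ⟨ht0, ht1, hqt⟩ := interpolation_weight_of_one_div_eq hp hθ0 hθ1 hq
  exact integrable_rpow_of_interpolation (fun x => abs_nonneg (u x)) hu.1.aemeasurable.abs
    zero_le_one hp.le ht0 ht1 hqt (by simpa using hu.abs) hup

theorem Lq_le_interpolation {p q θ : ℝ} {u : Rn N → ℝ} (hu : Integrable u)
    (hup : Integrable (fun x => |u x| ^ p)) (hp : 0 < p) (hθ0 : 0 < θ) (hθ1 : θ < 1)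
    (hq : 1 / q = θ + (1 - θ) / p) :
    Lq N q u ≤ (∫ x, |u x|) ^ θ * Lq N p u ^ (1 - θ) := by
  obtain ⟨ht0, ht1, hqt⟩ := interpolation_weight_of_one_div_eq hp hθ0 hθ1 hq
  have hq0 : 0 < q := pos_of_mul_pos_left ht0 hθ0.le
  have hM : 0 ≤ ∫ x, |u x| := integral_nonneg fun x => abs_nonneg (u x)
  have hI : 0 ≤ ∫ x, |u x| ^ p := integral_nonneg fun x => rpow_nonneg (abs_nonneg (u x)) p
  have hJ := integral_rpow_le_interpolation (fun x => abs_nonneg (u x)) hu.1.aemeasurable.abs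
    zero_le_one hp.le ht0 ht1 hqt (by simpa using hu.abs) hup
  simp only [rpow_one] at hJ
  calc Lq N q u ≤ ((∫ x, |u x|) ^ (q * θ) * (∫ x, |u x| ^ p) ^ (1 - q * θ)) ^ (1 / q) :=
        rpow_le_rpow (integral_nonneg fun x => rpow_nonneg (abs_nonneg (u x)) q) hJ
          (one_div_nonneg.2 hq0.le)
    _ = (∫ x, |u x|) ^ θ * Lq N p u ^ (1 - θ) := by
        rw [Lq, mul_rpow (rpow_nonneg hM _) (rpow_nonneg hI _), ← rpow_mul hM, ← rpow_mul hI,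
          ← rpow_mul hI]
        congr 2
        · field_simp
        · rw [show (1 - q * θ) * (1 / q) = 1 / q - θ by field_simp, hq]
          ring

theorem rpow_div_Lq_le_add_div_Lq {p q θ G : ℝ} {u : Rn N → ℝ} (hu : Integrable u)
    (hnt : nontriv N u) (hup : Integrable (fun x => |u x| ^ p)) (hG : 0 ≤ G) (hp : 0 < p)
    (hθ0 : 0 < θ) (hθ1 : θ < 1) (hq : 1 / q = θ + (1 - θ) / p) :
    θ ^ (-θ) * (1 - θ) ^ (-(1 - θ)) * (G / Lq N p u) ^ (1 - θ) ≤
      (G + ∫ x, |u x|) / Lq N q u := by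
  have h1θ : 0 < 1 - θ := sub_pos.2 hθ1
  have hq0 : 0 < q := by
    obtain ⟨ht0, -⟩ := interpolation_weight_of_one_div_eq hp hθ0 hθ1 hq
    exact pos_of_mul_pos_left ht0 hθ0.le
  have hLp := Lq_pos hp hnt hup
  have hLq := Lq_pos hq0 hnt (integrable_abs_rpow_of_interpolation hu hup hp hθ0 hθ1 hq)
  have hM : 0 ≤ ∫ x, |u x| := integral_nonneg fun x => abs_nonneg (u x)
  rw [le_div_iff₀ hLq]
  calc θ ^ (-θ) * (1 - θ) ^ (-(1 - θ)) * (G / Lq N p u) ^ (1 - θ) * Lq N q u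
      ≤ θ ^ (-θ) * (1 - θ) ^ (-(1 - θ)) * (G / Lq N p u) ^ (1 - θ) *
          ((∫ x, |u x|) ^ θ * Lq N p u ^ (1 - θ)) := by
        gcongr
        exact Lq_le_interpolation hu hup hp hθ0 hθ1 hq
    _ = θ ^ (-θ) * (1 - θ) ^ (-(1 - θ)) * ((∫ x, |u x|) ^ θ * G ^ (1 - θ)) := by
        rw [div_rpow hG hLp.le]
        field_simp
    _ ≤ θ ^ (-θ) * (1 - θ) ^ (-(1 - θ)) *
          (θ ^ θ * (1 - θ) ^ (1 - θ) * ((∫ x, |u x|) + G)) :=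
        mul_le_mul_of_nonneg_left (rpow_mul_rpow_le_add hθ0 hθ1 hM hG) (by positivity)
    _ = G + ∫ x, |u x| := by
        rw [rpow_neg hθ0.le, rpow_neg h1θ.le]
        field_simp
        ring

theorem Scrit_nonneg (s : ℝ) : 0 ≤ Scrit N s := by
  apply Real.sInf_nonneg
  rintro r ⟨u, -, -, rfl⟩
  exact div_nonneg ENNReal.toReal_nonneg (Lq_nonneg _ u)

theorem Scrit_le {s : ℝ} {u : Rn N → ℝ} (hu : memW N s u) (hnt : nontriv N u) :
    Scrit N s ≤ gag N s u / Lq N (N / (N - s)) u := by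
  refine csInf_le ⟨0, ?_⟩ ⟨u, hu, hnt, rfl⟩
  rintro r ⟨v, -, -, rfl⟩
  exact div_nonneg ENNReal.toReal_nonneg (Lq_nonneg _ v)

theorem rpow_Scrit_le_SFull {s q θ : ℝ} (hp : 0 < (N : ℝ) / (N - s)) (hθ0 : 0 < θ)
    (hθ1 : θ < 1) (hq : 1 / q = θ + (1 - θ) / (N / (N - s))) :
    θ ^ (-θ) * (1 - θ) ^ (-(1 - θ)) * Scrit N s ^ (1 - θ) ≤ SFull N s q := by
  have h1θ : 0 < 1 - θ := sub_pos.2 hθ1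
  by_cases hW : ∃ u, memW N s u ∧ nontriv N u
  · obtain ⟨u₀, hu₀, hnt₀⟩ := hW
    refine le_csInf ⟨_, u₀, hu₀, hnt₀, rfl⟩ ?_
    rintro _ ⟨u, hu, hnt, rfl⟩
    have hS := Scrit_le hu hnt
    by_cases hLp : Lq N (N / (N - s)) u = 0
    -- junk value: `Lq` vanishes when `|u| ^ p` is not integrable, and then `Scrit N s ≤ 0`
    · rw [hLp, div_zero] at hS
      rw [le_antisymm hS (Scrit_nonneg s), zero_rpow h1θ.ne', mul_zero]
      exact div_nonneg (add_nonneg ENNReal.toReal_nonneg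
        (integral_nonneg fun x => abs_nonneg (u x))) (Lq_nonneg q u)
    · calc θ ^ (-θ) * (1 - θ) ^ (-(1 - θ)) * Scrit N s ^ (1 - θ)
          ≤ θ ^ (-θ) * (1 - θ) ^ (-(1 - θ)) *
              (gag N s u / Lq N (N / (N - s)) u) ^ (1 - θ) := by
            gcongr
            exact Scrit_nonneg s
        _ ≤ _ := rpow_div_Lq_le_add_div_Lq hu.1 hnt
            (integrable_abs_rpow_of_Lq_ne_zero hp.ne' hLp) ENNReal.toReal_nonneg hp hθ0 hθ1 hq
  -- otherwise both infima are `sInf ∅ = 0`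
  · have hempty (g : (Rn N → ℝ) → ℝ) :
        {r : ℝ | ∃ u, memW N s u ∧ nontriv N u ∧ r = g u} = ∅ :=
      Set.eq_empty_of_forall_notMem fun _ ⟨u, hu, hnt, _⟩ => hW ⟨u, hu, hnt⟩
    rw [SFull, Scrit, hempty, hempty, Real.sInf_empty, zero_rpow h1θ.ne', mul_zero]

end

theorem S_full_lower_bound_general (N : ℕ) (s : ℝ)
    (q : ℝ) (hq1 : 1 < q) (hq : q < (N : ℝ) / ((N : ℝ) - s)) :
    SFull N s q ≥
      ((N / s) * (1 / q - ((N : ℝ) - s) / N)) ^ ((N / s) * (((N : ℝ) - s) / N - 1 / q)) *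
        ((N / s) * (1 - 1 / q)) ^ ((N / s) * (1 / q - 1)) *
        Scrit N s ^ ((N / s) * (1 - 1 / q)) := by
  obtain ⟨hs0, hsN⟩ := pos_and_lt_of_one_lt_div_sub (Nat.cast_nonneg N) (hq1.trans hq)
  have hN0 : (0 : ℝ) < N := hs0.trans hsN
  have hq0 : 0 < q := zero_lt_one.trans hq1
  set θ := (N / s) * (1 / q - ((N : ℝ) - s) / N) with hθ
  have h1θ : (N / s) * (1 - 1 / q) = 1 - θ := by
    rw [hθ]
    field_simp
    ring
  have hθ0 : 0 < θ := by
    refine mul_pos (div_pos hN0 hs0) (sub_pos.2 ?_)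
    rw [lt_div_iff₀ (sub_pos.2 hsN)] at hq
    rw [div_lt_div_iff₀ hN0 hq0]
    linarith
  have hθ1 : θ < 1 := by
    have : 0 < (N / s) * (1 - 1 / q) :=
      mul_pos (div_pos hN0 hs0) (sub_pos.2 ((div_lt_one hq0).2 hq1))
    linarith
  rw [ge_iff_le, h1θ, show (N / s) * (((N : ℝ) - s) / N - 1 / q) = -θ by ring,
    show (N / s) * (1 / q - 1) = -(1 - θ) by rw [← h1θ]; ring]
  refine rpow_Scrit_le_SFull (div_pos hN0 (sub_pos.2 hsN)) hθ0 hθ1 ?_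
  rw [hθ]
  field_simp
  ring

/-- the lower bound for `S_{s,q}(ℝ^N)`, `1 < q < 1*_s = N/(N-s)`. -/
theorem S_full_lower_bound (N : ℕ) (hN : 1 ≤ N) (s : ℝ) (hs0 : 0 < s) (hs1 : s < 1)
    (q : ℝ) (hq1 : 1 < q) (hq : q < (N : ℝ) / ((N : ℝ) - s)) :
    SFull N s q ≥
      ((N / s) * (1 / q - ((N : ℝ) - s) / N)) ^ ((N / s) * (((N : ℝ) - s) / N - 1 / q)) *
        ((N / s) * (1 - 1 / q)) ^ ((N / s) * (1 / q - 1)) *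
        Scrit N s ^ ((N / s) * (1 - 1 / q)) :=
  S_full_lower_bound_general N s q hq1 hq
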